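/- arXiv:1912.07549 — 4 statements merged into one kernel-verified Lean document; each statement's English description precedes it below -/
import Mathlib

section
/- If the index type E is finite, then the path pseudometric d_G is a (generalized) metric on G: for all ξ, θ ∈ G, d_G(ξ, θ) = 0 implies ξ = θ. -/
open scoped ENNReal

/-- The extended distance on the disjoint union `Σ e, [0, ℓ e]`. -/
noncomputable def dE {E : Type*} (ℓ : E → ℝ)
    (p q : Σ e : E, Set.Icc (0 : ℝ) (ℓ e)) : ℝ≥0∞ :=
  open Classical in
  if p.1 = q.1 then ENNReal.ofReal |p.2.1 - q.2.1| else ⊤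

/-- The set of endpoints of the intervals. -/
def Vset {E : Type*} (ℓ : E → ℝ) : Set (Σ e : E, Set.Icc (0 : ℝ) (ℓ e)) :=
  {p | p.2.1 = 0 ∨ p.2.1 = ℓ p.1}

/-- The path pseudometric on the metric graph `G = 𝓔/∼`: the infimum over all chains
`ξ₁,…,ξ_k, θ₁,…,θ_k` (here of length `k+1`, covering all `k ≥ 1`) with `q ξ₁ = ξ`,
`q θ_k = θ` and `θ_i ∼ ξ_{i+1}`, of `Σ_i dE ξ_i θ_i`. -/
noncomputable def dG {E : Type*} (ℓ : E → ℝ)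
    (r : Setoid (Σ e : E, Set.Icc (0 : ℝ) (ℓ e)))
    (ξ θ : Quotient r) : ℝ≥0∞ :=
  ⨅ (k : ℕ) (a : Fin (k + 1) → Σ e : E, Set.Icc (0 : ℝ) (ℓ e))
    (b : Fin (k + 1) → Σ e : E, Set.Icc (0 : ℝ) (ℓ e))
    (_ : Quotient.mk r (a 0) = ξ) (_ : Quotient.mk r (b (Fin.last k)) = θ)
    (_ : ∀ i : Fin k, r (b i.castSucc) (a i.succ)),
    ∑ i, dE ℓ (a i) (b i)

/-!
Let `S` consist of the endpoints together with `p` and `q`. Since `E` is finite, so is `S`, and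
distinct points of `S` are at distance at least some `δ > 0`; moreover `∼` only glues points of `S`.
Along a chain of total length `< δ` starting at `p`, the current point stays within the length
travelled so far of some point of `S` equivalent to `p`: a jump is either trivial or made from a
point of `S`, which is then that same point. At the end of the chain this forces `p ∼ q`.
-/

theorem Set.Finite.exists_pos_forall_eq_of_lt {X : Type*} {d : X → X → ℝ≥0∞}
    (hd : ∀ x y, d x y = 0 → x = y) {S : Set X} (hS : S.Finite) :
    ∃ δ > 0, ∀ x ∈ S, ∀ y ∈ S, d x y < δ → x = y := by
  set P := {xy : X × X | xy ∈ S ×ˢ S ∧ xy.1 ≠ xy.2}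
  have hP : P.Finite := (hS.prod hS).subset fun _ h => h.1
  rcases P.eq_empty_or_nonempty with hP_empty | hP_ne
  · refine ⟨1, one_pos, fun x hx y hy _ => by_contra fun hxy => ?_⟩
    exact hP_empty.subset (show (x, y) ∈ P from ⟨⟨hx, hy⟩, hxy⟩)
  · obtain ⟨⟨x₀, y₀⟩, ⟨-, hxy₀⟩, hmin⟩ := P.exists_min_image (fun xy => d xy.1 xy.2) hP hP_ne
    refine ⟨d x₀ y₀, pos_iff_ne_zero.2 fun h => hxy₀ (hd _ _ h), fun x hx y hy hlt => ?_⟩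
    by_contra hxy
    exact (hmin (x, y) ⟨⟨hx, hy⟩, hxy⟩).not_gt hlt

section Chain

variable {X : Type*} {d : X → X → ℝ≥0∞} {r : Setoid X} {S : Set X} {δ : ℝ≥0∞}

theorem mem_of_rel_of_mem (hr : ∀ x y, r x y → x = y ∨ x ∈ S ∧ y ∈ S) {x y : X} (hxy : r x y)
    (hy : y ∈ S) : x ∈ S := by
  rcases hr x y hxy with rfl | ⟨hx, -⟩ <;> assumption

theorem exists_rel_dist_chain_last_le_sum (htri : ∀ x y z, d x z ≤ d x y + d y z)
    (hr : ∀ x y, r x y → x = y ∨ x ∈ S ∧ y ∈ S) (hsep : ∀ x ∈ S, ∀ y ∈ S, d x y < δ → x = y)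
    {p : X} (hp : p ∈ S) :
    ∀ (k : ℕ) (a b : Fin (k + 1) → X), r (a 0) p → (∀ i : Fin k, r (b i.castSucc) (a i.succ)) →
      ∑ i, d (a i) (b i) < δ → ∃ s ∈ S, r s p ∧ d s (b (Fin.last k)) ≤ ∑ i, d (a i) (b i) := by
  intro k
  induction k with
  | zero =>
    intro a b h0 _ _
    exact ⟨a 0, mem_of_rel_of_mem hr h0 hp, h0, by simp⟩
  | succ k ih =>
    intro a b h0 hchain hsum
    rw [Fin.sum_univ_castSucc] at hsum ⊢
    obtain ⟨s, hsS, hsp, hsb⟩ := ih (Fin.init a) (Fin.init b) h0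
      (fun i => by simpa only [Fin.init, Fin.succ_castSucc] using hchain i.castSucc)
      (lt_of_le_of_lt le_self_add hsum)
    have hlink := hchain (Fin.last k)
    rw [Fin.succ_last] at hlink
    rcases hr _ _ hlink with heq | ⟨hbS, haS⟩
    · refine ⟨s, hsS, hsp, ?_⟩
      calc d s (b (Fin.last (k + 1)))
          ≤ d s (b (Fin.last k).castSucc) + d (a (Fin.last (k + 1))) (b (Fin.last (k + 1))) :=
            heq ▸ htri _ _ _
        _ ≤ _ := by gcongr; exact hsb
    · obtain rfl : s = b (Fin.last k).castSucc :=
        hsep s hsS _ hbS (hsb.trans_lt (lt_of_le_of_lt le_self_add hsum))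
      exact ⟨_, haS, r.trans (r.symm hlink) hsp, le_add_self⟩

theorem rel_of_chain_sum_lt (htri : ∀ x y z, d x z ≤ d x y + d y z)
    (hr : ∀ x y, r x y → x = y ∨ x ∈ S ∧ y ∈ S) (hsep : ∀ x ∈ S, ∀ y ∈ S, d x y < δ → x = y)
    {p q : X} (hp : p ∈ S) (hq : q ∈ S) (k : ℕ) (a b : Fin (k + 1) → X) (h0 : r (a 0) p)
    (hlast : r (b (Fin.last k)) q) (hchain : ∀ i : Fin k, r (b i.castSucc) (a i.succ))
    (hsum : ∑ i, d (a i) (b i) < δ) : r p q := by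
  obtain ⟨s, hsS, hsp, hsb⟩ :=
    exists_rel_dist_chain_last_le_sum htri hr hsep hp k a b h0 hchain hsum
  obtain rfl := hsep s hsS _ (mem_of_rel_of_mem hr hlast hq) (hsb.trans_lt hsum)
  exact r.trans (r.symm hsp) hlast

end Chain

section MetricGraph

variable {E : Type*} (ℓ : E → ℝ)

theorem dE_triangle (x y z : Σ e : E, Set.Icc (0 : ℝ) (ℓ e)) :
    dE ℓ x z ≤ dE ℓ x y + dE ℓ y z := by
  unfold dE
  by_cases hxy : x.1 = y.1
  · by_cases hyz : y.1 = z.1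
    · rw [if_pos hxy, if_pos hyz, if_pos (hxy.trans hyz),
        ← ENNReal.ofReal_add (abs_nonneg _) (abs_nonneg _)]
      exact ENNReal.ofReal_le_ofReal (abs_sub_le _ _ _)
    · simp [hyz]
  · simp [hxy]

theorem eq_of_dE_eq_zero (x y : Σ e : E, Set.Icc (0 : ℝ) (ℓ e)) (h : dE ℓ x y = 0) : x = y := by
  unfold dE at h
  split_ifs at h with hxy
  · exact Sigma.subtype_ext hxy (sub_eq_zero.1 (abs_nonpos_iff.1 (ENNReal.ofReal_eq_zero.1 h)))
  · exact absurd h ENNReal.top_ne_zero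

theorem Vset_finite [Finite E] : (Vset ℓ).Finite := by
  have hinj : Function.Injective fun p : Σ e : E, Set.Icc (0 : ℝ) (ℓ e) => (p.1, p.2.1) :=
    fun p q h => Sigma.subtype_ext (congrArg Prod.fst h) (congrArg Prod.snd h)
  refine Set.Finite.of_finite_image ?_ hinj.injOn
  refine (Set.finite_range fun eb : E × Bool => (eb.1, if eb.2 then 0 else ℓ eb.1)).subset ?_
  rintro _ ⟨p, hp | hp, rfl⟩
  · exact ⟨(p.1, true), by simp [hp]⟩
  · exact ⟨(p.1, false), by simp [hp]⟩

end MetricGraph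

theorem stmt3_general {E : Type*} [Finite E] (ℓ : E → ℝ)
    (r : Setoid (Σ e : E, Set.Icc (0 : ℝ) (ℓ e)))
    (hr : ∀ p q, r p q → p = q ∨ (p ∈ Vset ℓ ∧ q ∈ Vset ℓ)) :
    ∀ ξ θ : Quotient r, dG ℓ r ξ θ = 0 → ξ = θ := by
  intro ξ θ h
  induction ξ using Quotient.ind with | _ p => ?_
  induction θ using Quotient.ind with | _ q => ?_
  set S := insert p (insert q (Vset ℓ))
  have hrS : ∀ x y, r x y → x = y ∨ x ∈ S ∧ y ∈ S := fun x y hxy =>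
    (hr x y hxy).imp_right fun ⟨hx, hy⟩ => ⟨.inr (.inr hx), .inr (.inr hy)⟩
  obtain ⟨δ, hδ, hsep⟩ :=
    (((Vset_finite ℓ).insert q).insert p).exists_pos_forall_eq_of_lt (eq_of_dE_eq_zero ℓ)
  have hchain := h ▸ hδ
  simp only [dG, iInf_lt_iff] at hchain
  obtain ⟨k, a, b, ha, hb, hlink, hsum⟩ := hchain
  exact Quotient.sound <| rel_of_chain_sum_lt (dE_triangle ℓ) hrS hsep (by simp [S]) (by simp [S])
    k a b (Quotient.exact ha) (Quotient.exact hb) hlink hsum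

/-- If the edge set is finite, the path pseudometric is a (generalized) metric. -/
theorem stmt3 {E : Type*} [Finite E] (ℓ : E → ℝ) (hℓ : ∀ e, 0 < ℓ e)
    (r : Setoid (Σ e : E, Set.Icc (0 : ℝ) (ℓ e)))
    (hr : ∀ p q, r p q → p = q ∨ (p ∈ Vset ℓ ∧ q ∈ Vset ℓ)) :
    ∀ ξ θ : Quotient r, dG ℓ r ξ θ = 0 → ξ = θ :=
  stmt3_general ℓ r hr
end

section
/- If the edge lengths are uniformly bounded below, i.e. there exists c > 0 with c ≤ ℓ e for all e ∈ E, then the path pseudometric d_G is a (generalized) metric on G: for all ξ, θ ∈ G, d_G(ξ, θ) = 0 implies ξ = θ. -/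
open scoped ENNReal

/-! Every function `f` on `𝓔` that is constant on `∼`-classes and 1-Lipschitz on each edge
satisfies `|f ξ - f θ| ≤ d_G(ξ, θ)`: along an admissible chain the increments of `f` telescope,
and each one is bounded by `d_𝓔(ξ_i, θ_i)`. So it suffices to separate two inequivalent points by
such a function. If one of them is an interior point, a tent around it supported inside its open
edge does; if both are vertices, put a tent of height `c` at every endpoint equivalent to the
first one. Since `c ≤ ℓ e`, a tent at one end of an edge vanishes at the other end, so the function
takes the value `c` on the class of the first vertex and `0` at all other vertices. -/

section Chain

variable {X α : Type*} [PseudoEMetricSpace α] (r : Setoid X) {f : X → α}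

theorem edist_le_sum_edist_of_chain (hf : ∀ s t, r s t → f s = f t) :
    ∀ (k : ℕ) (a b : Fin (k + 1) → X), (∀ i : Fin k, r (b i.castSucc) (a i.succ)) →
      edist (f (a 0)) (f (b (Fin.last k))) ≤ ∑ i, edist (f (a i)) (f (b i))
  | 0, a, b, _ => by simp [Fin.last]
  | k + 1, a, b, hchain => by
    have hprev := edist_le_sum_edist_of_chain hf k (fun i ↦ a i.castSucc) (fun i ↦ b i.castSucc)
      fun i ↦ hchain i.castSucc
    have hlink : f (b (Fin.last k).castSucc) = f (a (Fin.last (k + 1))) :=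
      hf _ _ (hchain (Fin.last k))
    rw [Fin.sum_univ_castSucc]
    calc edist (f (a 0)) (f (b (Fin.last (k + 1))))
        ≤ edist (f (a 0)) (f (a (Fin.last (k + 1))))
          + edist (f (a (Fin.last (k + 1)))) (f (b (Fin.last (k + 1)))) := edist_triangle _ _ _
      _ ≤ _ := by
        gcongr
        simpa [← hlink] using hprev

end Chain

noncomputable def tent (δ t y : ℝ) : ℝ := max 0 (δ - |y - t|)

theorem lipschitzWith_tent (δ t : ℝ) : LipschitzWith 1 (tent δ t) := by
  refine LipschitzWith.of_dist_le_mul fun y z ↦ ?_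
  simp only [tent, Real.dist_eq, NNReal.coe_one, one_mul, max_comm (0 : ℝ)]
  calc |max (δ - |y - t|) 0 - max (δ - |z - t|) 0| ≤ |(δ - |y - t|) - (δ - |z - t|)| :=
        abs_max_sub_max_le_abs _ _ _
    _ = |(|z - t| - |y - t|)| := by ring_nf
    _ ≤ |(z - t) - (y - t)| := abs_abs_sub_abs_le_abs_sub _ _
    _ = |y - z| := by rw [abs_sub_comm]; ring_nf

theorem lipschitzWith_tent_subtype (δ t : ℝ) (s : Set ℝ) :
    LipschitzWith 1 fun y : s ↦ tent δ t y :=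
  one_mul (1 : NNReal) ▸ (lipschitzWith_tent δ t).comp (LipschitzWith.subtype_val s)

theorem tent_self {δ : ℝ} (hδ : 0 ≤ δ) (t : ℝ) : tent δ t t = δ := by
  simp [tent, hδ]

theorem tent_eq_zero {δ t y : ℝ} (h : δ ≤ |y - t|) : tent δ t y = 0 :=
  max_eq_left (by linarith)

theorem tent_lt {δ t y : ℝ} (hδ : 0 < δ) (hy : y ≠ t) : tent δ t y < δ :=
  max_lt hδ (by linarith [abs_pos.2 (sub_ne_zero.2 hy)])

theorem LipschitzWith.ite_zero {α : Type*} [PseudoEMetricSpace α] {K : NNReal} {g : α → ℝ}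
    (hg : LipschitzWith K g) (P : Prop) [Decidable P] :
    LipschitzWith K fun x ↦ if P then g x else 0 := by
  split_ifs
  exacts [hg, LipschitzWith.const' 0]

section MetricGraph

variable {E : Type*} {ℓ : E → ℝ}

local notation "𝓔" => Σ e : E, Set.Icc (0 : ℝ) (ℓ e)

/-- `f` descends to a 1-Lipschitz function on the metric graph `𝓔/∼`. -/
structure IsGraphLipschitz (r : Setoid 𝓔) (f : 𝓔 → ℝ) : Prop where
  resp : ∀ s t, r s t → f s = f t
  lipschitzWith : ∀ e, LipschitzWith 1 fun x : Set.Icc (0 : ℝ) (ℓ e) ↦ f ⟨e, x⟩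

theorem IsGraphLipschitz.edist_le_dE {r : Setoid 𝓔} {f : 𝓔 → ℝ} (hf : IsGraphLipschitz r f)
    (s t : 𝓔) : edist (f s) (f t) ≤ dE ℓ s t := by
  obtain ⟨e, x⟩ := s
  obtain ⟨e', y⟩ := t
  unfold dE
  split_ifs with he
  · subst he
    simpa [Subtype.edist_eq, edist_dist, Subtype.dist_eq, Real.dist_eq] using
      (hf.lipschitzWith e).edist_le_mul x y
  · exact le_top

theorem IsGraphLipschitz.edist_le_dG {r : Setoid 𝓔} {f : 𝓔 → ℝ} (hf : IsGraphLipschitz r f)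
    (p q : 𝓔) : edist (f p) (f q) ≤ dG ℓ r ⟦p⟧ ⟦q⟧ := by
  refine le_iInf fun k ↦ le_iInf fun a ↦ le_iInf fun b ↦ le_iInf fun ha ↦
    le_iInf fun hb ↦ le_iInf fun hchain ↦ ?_
  rw [← hf.resp _ _ (Quotient.exact ha), ← hf.resp _ _ (Quotient.exact hb)]
  exact (edist_le_sum_edist_of_chain r hf.resp k a b hchain).trans
    (Finset.sum_le_sum fun i _ ↦ hf.edist_le_dE (a i) (b i))

theorem IsGraphLipschitz.eq_of_dG_eq_zero {r : Setoid 𝓔} {f : 𝓔 → ℝ}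
    (hf : IsGraphLipschitz r f) {p q : 𝓔} (h : dG ℓ r ⟦p⟧ ⟦q⟧ = 0) : f p = f q :=
  edist_eq_zero.1 (nonpos_iff_eq_zero.1 (h ▸ hf.edist_le_dG p q))

theorem exists_isGraphLipschitz_ne_of_notMem_Vset {r : Setoid 𝓔}
    (hr : ∀ p q, r p q → p = q ∨ (p ∈ Vset ℓ ∧ q ∈ Vset ℓ)) {p q : 𝓔} (hp : p ∉ Vset ℓ)
    (hpq : p ≠ q) : ∃ f : 𝓔 → ℝ, IsGraphLipschitz r f ∧ f p ≠ f q := by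
  classical
  obtain ⟨e, x, hx0, hxℓ⟩ := p
  have hx0 : 0 < x := hx0.lt_of_ne fun h ↦ hp (.inl h.symm)
  have hxℓ : x < ℓ e := hxℓ.lt_of_ne fun h ↦ hp (.inr h)
  set δ := min x (ℓ e - x)
  have hδ : 0 < δ := lt_min hx0 (by linarith)
  let f : 𝓔 → ℝ := fun s ↦ if s.1 = e then tent δ x s.2 else 0
  have hfV : ∀ s ∈ Vset ℓ, f s = 0 := by
    rintro ⟨e', y, _⟩ hs
    by_cases he : e' = e
    · subst he
      refine if_pos rfl |>.trans (tent_eq_zero ?_)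
      rcases hs with h | h <;> simp only at h <;> subst h
      · rw [zero_sub, abs_neg, abs_of_pos hx0]
        exact min_le_left _ _
      · rw [abs_of_pos (sub_pos.2 hxℓ)]
        exact min_le_right _ _
    · exact if_neg he
  refine ⟨f, ⟨fun s t hst ↦ ?_, fun e' ↦ ?_⟩, ?_⟩
  · rcases hr s t hst with rfl | ⟨hs, ht⟩
    · rfl
    · rw [hfV s hs, hfV t ht]
  · exact (lipschitzWith_tent_subtype δ x _).ite_zero (e' = e)
  · obtain ⟨e', y, _⟩ := q
    have hfp : f ⟨e, x, hx0.le, hxℓ.le⟩ = δ := (if_pos rfl).trans (tent_self hδ.le x)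
    rw [hfp]
    refine (ne_of_lt ?_).symm
    by_cases he : e' = e
    · subst he
      have hyx : y ≠ x := fun h ↦ hpq (by subst h; rfl)
      exact (if_pos rfl).trans_lt (tent_lt hδ hyx)
    · exact (if_neg he).trans_lt hδ

theorem exists_isGraphLipschitz_ne_of_mem_Vset {r : Setoid 𝓔}
    (hr : ∀ p q, r p q → p = q ∨ (p ∈ Vset ℓ ∧ q ∈ Vset ℓ)) {c : ℝ} (hc : 0 < c)
    (hcℓ : ∀ e, c ≤ ℓ e) {p q : 𝓔} (hp : p ∈ Vset ℓ) (hq : q ∈ Vset ℓ) (hpq : ¬ r p q) :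
    ∃ f : 𝓔 → ℝ, IsGraphLipschitz r f ∧ f p ≠ f q := by
  classical
  have hℓ : ∀ e, 0 ≤ ℓ e := fun e ↦ hc.le.trans (hcℓ e)
  let left (e : E) : 𝓔 := ⟨e, 0, le_rfl, hℓ e⟩
  let right (e : E) : 𝓔 := ⟨e, ℓ e, hℓ e, le_rfl⟩
  let f : 𝓔 → ℝ := fun s ↦
    max (if r (left s.1) p then tent c 0 s.2 else 0)
      (if r (right s.1) p then tent c (ℓ s.1) s.2 else 0)
  have hfV : ∀ v ∈ Vset ℓ, f v = if r v p then c else 0 := by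
    have hfar : ∀ e, tent c 0 (ℓ e) = 0 ∧ tent c (ℓ e) 0 = 0 := fun e ↦
      ⟨tent_eq_zero (by simpa [abs_of_nonneg (hℓ e)] using hcℓ e),
        tent_eq_zero (by simpa [abs_of_nonneg (hℓ e)] using hcℓ e)⟩
    rintro ⟨e, y, _⟩ hv
    rcases hv with h | h <;> simp only at h <;> subst h
    · simp only [f, tent_self hc.le, (hfar e).2, ite_self]
      split_ifs <;> simp [hc.le]
    · simp only [f, tent_self hc.le, (hfar e).1, ite_self]
      split_ifs <;> simp [hc.le]
  refine ⟨f, ⟨fun s t hst ↦ ?_, fun e ↦ ?_⟩, ?_⟩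
  · rcases hr s t hst with rfl | ⟨hs, ht⟩
    · rfl
    · have hst' : r s p ↔ r t p := ⟨(r.trans (r.symm hst) ·), (r.trans hst ·)⟩
      rw [hfV s hs, hfV t ht, if_congr hst' rfl rfl]
  · simpa using ((lipschitzWith_tent_subtype c 0 _).ite_zero (r (left e) p)).max
      ((lipschitzWith_tent_subtype c (ℓ e) _).ite_zero (r (right e) p))
  · rw [hfV p hp, hfV q hq, if_pos (r.refl p), if_neg fun h ↦ hpq (r.symm h)]
    exact hc.ne'

end MetricGraph

theorem stmt4_general {E : Type*} (ℓ : E → ℝ)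
    (r : Setoid (Σ e : E, Set.Icc (0 : ℝ) (ℓ e)))
    (hr : ∀ p q, r p q → p = q ∨ (p ∈ Vset ℓ ∧ q ∈ Vset ℓ))
    (hc : ∃ c > (0 : ℝ), ∀ e, c ≤ ℓ e) :
    ∀ ξ θ : Quotient r, dG ℓ r ξ θ = 0 → ξ = θ := by
  obtain ⟨c, hc0, hcℓ⟩ := hc
  rintro ⟨p⟩ ⟨q⟩ h0
  by_contra hne
  have hpq : ¬ r p q := fun h ↦ hne (Quotient.sound h)
  obtain ⟨f, hf, hfpq⟩ : ∃ f, IsGraphLipschitz r f ∧ f p ≠ f q := by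
    by_cases hp : p ∈ Vset ℓ
    · by_cases hq : q ∈ Vset ℓ
      · exact exists_isGraphLipschitz_ne_of_mem_Vset hr hc0 hcℓ hp hq hpq
      · obtain ⟨f, hf, hqp⟩ := exists_isGraphLipschitz_ne_of_notMem_Vset hr hq
          fun h ↦ hpq (h ▸ r.refl p)
        exact ⟨f, hf, hqp.symm⟩
    · exact exists_isGraphLipschitz_ne_of_notMem_Vset hr hp fun h ↦ hpq (h ▸ r.refl p)
  exact hfpq (hf.eq_of_dG_eq_zero h0)

/-- If the edge lengths are uniformly bounded below, the path pseudometric is a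
(generalized) metric. -/
theorem stmt4 {E : Type*} [Countable E] (ℓ : E → ℝ) (hℓ : ∀ e, 0 < ℓ e)
    (r : Setoid (Σ e : E, Set.Icc (0 : ℝ) (ℓ e)))
    (hr : ∀ p q, r p q → p = q ∨ (p ∈ Vset ℓ ∧ q ∈ Vset ℓ))
    (hc : ∃ c > (0 : ℝ), ∀ e, c ≤ ℓ e) :
    ∀ ξ θ : Quotient r, dG ℓ r ξ θ = 0 → ξ = θ :=
  stmt4_general ℓ r hr hc
end

section
/- If there exists c > 0 with c ≤ ℓ e for all e ∈ E, then the metric graph G is complete with respect to d_G: every sequence (ξ_n) in G that is Cauchy with respect to d_G (i.e. for every ε > 0 there is N such that d_G(ξ_m, ξ_n) < ε for all m, n ≥ N) converges to some ξ ∈ G, in the sense that d_G(ξ_n, ξ) → 0. -/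
open scoped ENNReal

/-!
Two distinct endpoints of one edge are at least `c` apart, so a chain of total length `< c`
passes through at most one vertex class. A Cauchy sequence in `G` therefore either comes
arbitrarily close to vertices infinitely often, and then all those vertices lie in one class,
which is the limit; or it eventually stays `ε`-away from all vertices, and then short chains
between its terms cannot pass through a vertex, so the terms eventually lie on one edge, where
`d_G ≤ d_𝓔` and `d_𝓔` is the distance of `[0, ℓ e]`, a complete space.
-/

open Filter Topology

def IsCauchyWrt {α : Type*} (d : α → α → ℝ≥0∞) (u : ℕ → α) : Prop :=
  ∀ ε : ℝ≥0∞, 0 < ε → ∃ N : ℕ, ∀ m n : ℕ, N ≤ m → N ≤ n → d (u m) (u n) < ε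

lemma tendsto_of_isCauchyWrt_of_frequently_lt {α : Type*} {d : α → α → ℝ≥0∞}
    (htri : ∀ x y z, d x z ≤ d x y + d y z) {u : ℕ → α} {x : α} (hu : IsCauchyWrt d u)
    (hx : ∀ ε : ℝ≥0∞, 0 < ε → ∃ᶠ n in atTop, d (u n) x < ε) :
    Tendsto (fun n => d (u n) x) atTop (𝓝 0) := by
  refine ENNReal.tendsto_nhds_zero.2 fun ε hε => ?_
  obtain ⟨N, hN⟩ := hu (ε / 2) (ENNReal.half_pos hε.ne')
  obtain ⟨n, hn, hnx⟩ := frequently_atTop.1 (hx (ε / 2) (ENNReal.half_pos hε.ne')) N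
  filter_upwards [eventually_ge_atTop N] with m hm
  calc d (u m) x ≤ d (u m) (u n) + d (u n) x := htri _ _ _
    _ ≤ ε / 2 + ε / 2 := add_le_add (hN m n hm hn).le hnx.le
    _ = ε := ENNReal.add_halves ε

section MetricGraph

variable {E : Type*} {ℓ : E → ℝ}

local notation "𝓔" => Σ e : E, Set.Icc (0 : ℝ) (ℓ e)

variable {r : Setoid (Σ e : E, Set.Icc (0 : ℝ) (ℓ e))} {c : ℝ} {ξ : ℕ → Quotient r}

lemma dE_self (p : 𝓔) : dE ℓ p p = 0 := by
  simp [dE]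

lemma dE_comm (p q : 𝓔) : dE ℓ p q = dE ℓ q p := by
  by_cases h : p.1 = q.1
  · simp [dE, h, abs_sub_comm]
  · simp [dE, h, Ne.symm h]

lemma dE_of_fst_eq {p q : 𝓔} (h : p.1 = q.1) :
    dE ℓ p q = ENNReal.ofReal |p.2.1 - q.2.1| :=
  if_pos h

lemma fst_eq_of_dE_ne_top {p q : 𝓔} (h : dE ℓ p q ≠ ⊤) : p.1 = q.1 := by
  by_contra hne
  exact h (if_neg hne)

lemma dE_triangle_s8 (p q s : 𝓔) : dE ℓ p s ≤ dE ℓ p q + dE ℓ q s := by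
  by_cases hpq : p.1 = q.1
  · by_cases hqs : q.1 = s.1
    · rw [dE_of_fst_eq hpq, dE_of_fst_eq hqs, dE_of_fst_eq (hpq.trans hqs),
        ← ENNReal.ofReal_add (abs_nonneg _) (abs_nonneg _)]
      exact ENNReal.ofReal_le_ofReal (abs_sub_le _ _ _)
    · simp [dE, hqs]
  · simp [dE, hpq]

lemma eq_of_mem_Vset_of_dE_lt (hc : ∀ e, c ≤ ℓ e) {p q : 𝓔}
    (hp : p ∈ Vset ℓ) (hq : q ∈ Vset ℓ) (h : dE ℓ p q < ENNReal.ofReal c) : p = q := by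
  obtain ⟨e, x, hx⟩ := p
  obtain ⟨f, y, hy⟩ := q
  obtain rfl : e = f := fst_eq_of_dE_ne_top (h.trans ENNReal.ofReal_lt_top).ne
  simp only [dE, if_true, ENNReal.ofReal_lt_ofReal_iff'] at h
  have hlt : |x - y| < ℓ e := h.1.trans_le (hc e)
  change x = 0 ∨ x = ℓ e at hp
  change y = 0 ∨ y = ℓ e at hq
  obtain rfl : x = y := by
    rcases hp with rfl | rfl <;> rcases hq with rfl | rfl <;>
      first | rfl | (rw [abs_lt] at hlt; exfalso; linarith [hlt.1, hlt.2])
  rfl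

lemma exists_tendsto_dE_of_isCauchyWrt {p : ℕ → 𝓔}
    (hp : IsCauchyWrt (dE ℓ) p) :
    ∃ p' : 𝓔, Tendsto (fun n => dE ℓ (p n) p') atTop (𝓝 0) := by
  obtain ⟨N, hN⟩ := hp 1 one_pos
  have hedge : ∀ n ≥ N, (p n).1 = (p N).1 := fun n hn =>
    fst_eq_of_dE_ne_top (hN n N hn le_rfl).ne_top
  have hcauchy : CauchySeq fun n => ((p n).2 : ℝ) := by
    refine Metric.cauchySeq_iff.2 fun ε hε => ?_
    obtain ⟨M, hM⟩ := hp (ENNReal.ofReal ε) (ENNReal.ofReal_pos.2 hε)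
    refine ⟨max M N, fun m hm n hn => ?_⟩
    have h := hM m n (le_of_max_le_left hm) (le_of_max_le_left hn)
    rwa [dE_of_fst_eq ((hedge m (le_of_max_le_right hm)).trans
      (hedge n (le_of_max_le_right hn)).symm), ENNReal.ofReal_lt_ofReal_iff hε] at h
  obtain ⟨y, hy⟩ := cauchySeq_tendsto_of_complete hcauchy
  have hy_mem : y ∈ Set.Icc 0 (ℓ (p N).1) :=
    isClosed_Icc.mem_of_tendsto hy <| eventually_atTop.2
      ⟨N, fun n hn => hedge n hn ▸ (p n).2.2⟩
  refine ⟨⟨(p N).1, y, hy_mem⟩, ?_⟩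
  have hlim : Tendsto (fun n => ENNReal.ofReal |((p n).2 : ℝ) - y|) atTop (𝓝 0) := by
    simpa using ENNReal.tendsto_ofReal (hy.sub_const y).abs
  refine hlim.congr' (eventually_atTop.2 ⟨N, fun n hn => ?_⟩)
  exact (dE_of_fst_eq (q := ⟨(p N).1, y, hy_mem⟩) (hedge n hn)).symm

lemma dG_le_sum {ξ θ : Quotient r} {k : ℕ} {a b : Fin (k + 1) → 𝓔}
    (ha : Quotient.mk r (a 0) = ξ) (hb : Quotient.mk r (b (Fin.last k)) = θ)
    (hab : ∀ i : Fin k, r (b i.castSucc) (a i.succ)) :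
    dG ℓ r ξ θ ≤ ∑ i, dE ℓ (a i) (b i) :=
  iInf_le_of_le k <| iInf_le_of_le a <| iInf_le_of_le b <| iInf_le_of_le ha <|
    iInf_le_of_le hb <| iInf_le _ hab

lemma dG_lt_iff {ξ θ : Quotient r} {t : ℝ≥0∞} :
    dG ℓ r ξ θ < t ↔ ∃ (k : ℕ) (a b : Fin (k + 1) → 𝓔),
      Quotient.mk r (a 0) = ξ ∧ Quotient.mk r (b (Fin.last k)) = θ ∧
      (∀ i : Fin k, r (b i.castSucc) (a i.succ)) ∧ ∑ i, dE ℓ (a i) (b i) < t := by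
  simp only [dG, iInf_lt_iff, exists_prop]

lemma le_dG_iff {ξ θ : Quotient r} {t : ℝ≥0∞} :
    t ≤ dG ℓ r ξ θ ↔ ∀ (k : ℕ) (a b : Fin (k + 1) → 𝓔),
      Quotient.mk r (a 0) = ξ → Quotient.mk r (b (Fin.last k)) = θ →
      (∀ i : Fin k, r (b i.castSucc) (a i.succ)) → t ≤ ∑ i, dE ℓ (a i) (b i) := by
  simp only [dG, le_iInf_iff]

lemma dG_mk_le_dE (p q : 𝓔) : dG ℓ r ⟦p⟧ ⟦q⟧ ≤ dE ℓ p q := by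
  simpa using dG_le_sum (r := r) (a := fun _ : Fin 1 => p) (b := fun _ => q) rfl rfl
    Fin.elim0

lemma dG_self (ξ : Quotient r) : dG ℓ r ξ ξ = 0 := by
  induction ξ using Quotient.inductionOn with
  | h p => exact le_antisymm ((dG_mk_le_dE p p).trans_eq (dE_self p)) zero_le

lemma dG_comm_le (ξ θ : Quotient r) : dG ℓ r θ ξ ≤ dG ℓ r ξ θ := by
  refine le_dG_iff.2 fun k a b ha hb hab => ?_
  refine (dG_le_sum (a := fun i => b i.rev) (b := fun i => a i.rev)
    (by simpa using hb) (by simpa using ha) fun i => ?_).trans_eq ?_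
  · simpa [Fin.rev_castSucc, Fin.rev_succ] using r.symm (hab i.rev)
  · exact Fintype.sum_bijective Fin.rev Fin.rev_bijective _ _ fun i => dE_comm _ _

lemma dG_comm (ξ θ : Quotient r) : dG ℓ r ξ θ = dG ℓ r θ ξ :=
  le_antisymm (dG_comm_le θ ξ) (dG_comm_le ξ θ)

lemma dG_le_sum_add_sum {ξ θ ζ : Quotient r} {m n : ℕ}
    {a b : Fin (m + 1) → 𝓔} {a' b' : Fin (n + 1) → 𝓔}
    (ha : Quotient.mk r (a 0) = ξ) (hb : Quotient.mk r (b (Fin.last m)) = θ)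
    (hab : ∀ i : Fin m, r (b i.castSucc) (a i.succ))
    (ha' : Quotient.mk r (a' 0) = θ) (hb' : Quotient.mk r (b' (Fin.last n)) = ζ)
    (hab' : ∀ i : Fin n, r (b' i.castSucc) (a' i.succ)) :
    dG ℓ r ξ ζ ≤ ∑ i, dE ℓ (a i) (b i) + ∑ i, dE ℓ (a' i) (b' i) := by
  -- `Fin (m + 1 + (n + 1))` is definitionally `Fin (m + 1 + n + 1)`.
  refine (dG_le_sum (k := m + 1 + n)
    (a := (Fin.append a a' : Fin (m + 1 + (n + 1)) → 𝓔))
    (b := (Fin.append b b' : Fin (m + 1 + (n + 1)) → 𝓔))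
    ?_ ?_ ?_).trans_eq ?_
  · rwa [← Fin.append_left a a' 0] at ha
  · rwa [← Fin.append_right b b' (Fin.last n)] at hb'
  · intro i
    refine Fin.addCases (fun j => ?_) (fun j => ?_) i
    · induction j using Fin.lastCases with
      | last =>
        show r (Fin.append b b' (Fin.castAdd (n + 1) (Fin.last m)))
          (Fin.append a a' (Fin.natAdd (m + 1) 0))
        rw [Fin.append_left, Fin.append_right]
        exact Quotient.exact (hb.trans ha'.symm)
      | cast j =>
        show r (Fin.append b b' (Fin.castAdd (n + 1) j.castSucc))
          (Fin.append a a' (Fin.castAdd (n + 1) j.succ))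
        rw [Fin.append_left, Fin.append_left]
        exact hab j
    · show r (Fin.append b b' (Fin.natAdd (m + 1) j.castSucc))
        (Fin.append a a' (Fin.natAdd (m + 1) j.succ))
      rw [Fin.append_right, Fin.append_right]
      exact hab' j
  · exact (Fin.sum_univ_add (a := m + 1) (b := n + 1)
      fun i => dE ℓ (Fin.append a a' i) (Fin.append b b' i)).trans
      (by simp only [Fin.append_left, Fin.append_right])

lemma dG_triangle (ξ θ ζ : Quotient r) : dG ℓ r ξ ζ ≤ dG ℓ r ξ θ + dG ℓ r θ ζ := by
  conv_rhs => simp only [dG, ENNReal.iInf_add, ENNReal.add_iInf]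
  simp only [le_iInf_iff]
  intro n a' b' ha' hb' hab' m a b ha hb hab
  exact dG_le_sum_add_sum ha hb hab ha' hb' hab'

lemma dE_le_sum_or_exists_vertex_of_chain (hc : ∀ e, c ≤ ℓ e)
    (hr : ∀ p q, r p q → p = q ∨ (p ∈ Vset ℓ ∧ q ∈ Vset ℓ)) {k : ℕ} {a b : Fin (k + 1) → 𝓔}
    (hab : ∀ i : Fin k, r (b i.castSucc) (a i.succ))
    (hsum : ∑ i, dE ℓ (a i) (b i) < ENNReal.ofReal c) :
    dE ℓ (a 0) (b (Fin.last k)) ≤ ∑ i, dE ℓ (a i) (b i) ∨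
      ∃ v ∈ Vset ℓ, ∃ w ∈ Vset ℓ, r v w ∧ dE ℓ (a 0) v ≤ ∑ i, dE ℓ (a i) (b i) ∧
        dE ℓ w (b (Fin.last k)) ≤ ∑ i, dE ℓ (a i) (b i) := by
  induction k with
  | zero => simp
  | succ k ih =>
    rw [Fin.sum_univ_castSucc] at hsum ⊢
    set S := ∑ i : Fin (k + 1), dE ℓ (a i.castSucc) (b i.castSucc)
    set x := b (Fin.last k).castSucc
    set y := a (Fin.last (k + 1))
    set z := b (Fin.last (k + 1))
    have hS : S < ENNReal.ofReal c := le_self_add.trans_lt hsum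
    have hxy : x = y ∨ (x ∈ Vset ℓ ∧ y ∈ Vset ℓ) := hr _ _ (hab (Fin.last k))
    have ih' : dE ℓ (a 0) x ≤ S ∨ ∃ v ∈ Vset ℓ, ∃ w ∈ Vset ℓ, r v w ∧ dE ℓ (a 0) v ≤ S ∧
        dE ℓ w x ≤ S := ih (fun i => hab i.castSucc) hS
    rcases ih' with hdir | ⟨v, hv, w, hw, hvw, hav, hwx⟩
    · rcases hxy with hxy | ⟨hx, hy⟩
      · left
        calc dE ℓ (a 0) z ≤ dE ℓ (a 0) x + dE ℓ x z := dE_triangle_s8 _ _ _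
          _ ≤ S + dE ℓ y z := add_le_add hdir (by rw [hxy])
      · exact Or.inr ⟨x, hx, y, hy, hab (Fin.last k), hdir.trans le_self_add, le_add_self⟩
    · refine Or.inr ⟨v, hv, ?_⟩
      rcases hxy with hxy | ⟨hx, hy⟩
      · refine ⟨w, hw, hvw, hav.trans le_self_add, ?_⟩
        calc dE ℓ w z ≤ dE ℓ w x + dE ℓ x z := dE_triangle_s8 _ _ _
          _ ≤ S + dE ℓ y z := add_le_add hwx (by rw [hxy])
      · obtain rfl : w = x := eq_of_mem_Vset_of_dE_lt hc hw hx (hwx.trans_lt hS)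
        exact ⟨y, hy, r.trans hvw (hab (Fin.last k)), hav.trans le_self_add, le_add_self⟩

lemma mk_eq_mk_of_dG_lt (hc : ∀ e, c ≤ ℓ e)
    (hr : ∀ p q, r p q → p = q ∨ (p ∈ Vset ℓ ∧ q ∈ Vset ℓ)) {v w : 𝓔}
    (hv : v ∈ Vset ℓ) (hw : w ∈ Vset ℓ) (h : dG ℓ r ⟦v⟧ ⟦w⟧ < ENNReal.ofReal c) :
    (⟦v⟧ : Quotient r) = ⟦w⟧ := by
  have mem_Vset_of_rel : ∀ {p q : 𝓔}, r p q → q ∈ Vset ℓ → p ∈ Vset ℓ := fun hpq hq =>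
    (hr _ _ hpq).elim (· ▸ hq) And.left
  obtain ⟨k, a, b, ha, hb, hab, hsum⟩ := dG_lt_iff.1 h
  have ha₀ := mem_Vset_of_rel (Quotient.exact ha) hv
  have hbₖ := mem_Vset_of_rel (Quotient.exact hb) hw
  rw [← ha, ← hb]
  rcases dE_le_sum_or_exists_vertex_of_chain hc hr hab hsum with
    hdir | ⟨v', hv', w', hw', hvw, hav, hwb⟩
  · rw [eq_of_mem_Vset_of_dE_lt hc ha₀ hbₖ (hdir.trans_lt hsum)]
  · rw [eq_of_mem_Vset_of_dE_lt hc ha₀ hv' (hav.trans_lt hsum),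
      ← eq_of_mem_Vset_of_dE_lt hc hw' hbₖ (hwb.trans_lt hsum)]
    exact Quotient.sound hvw

lemma dE_lt_or_exists_vertex_of_dG_lt (hc : ∀ e, c ≤ ℓ e)
    (hr : ∀ p q, r p q → p = q ∨ (p ∈ Vset ℓ ∧ q ∈ Vset ℓ)) {p p' : 𝓔} {t : ℝ≥0∞}
    (ht : t ≤ ENNReal.ofReal c) (h : dG ℓ r ⟦p⟧ ⟦p'⟧ < t) :
    dE ℓ p p' < t ∨ ∃ v ∈ Vset ℓ, dG ℓ r ⟦p⟧ ⟦v⟧ < t := by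
  obtain ⟨k, a, b, ha, hb, hab, hsum⟩ := dG_lt_iff.1 h
  rcases dE_le_sum_or_exists_vertex_of_chain hc hr hab (hsum.trans_le ht) with
    hdir | ⟨v, hv, -, -, -, hav, -⟩
  · rcases hr _ _ (Quotient.exact ha) with rfl | ⟨-, hp⟩
    · rcases hr _ _ (Quotient.exact hb) with rfl | ⟨-, hp'⟩
      · exact Or.inl (hdir.trans_lt hsum)
      · exact Or.inr ⟨p', hp', h⟩
    · exact Or.inr ⟨p, hp, by rw [dG_self]; exact zero_le.trans_lt h⟩
  · refine Or.inr ⟨v, hv, ?_⟩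
    rw [← ha]
    exact (dG_mk_le_dE _ _).trans_lt (hav.trans_lt hsum)

lemma exists_tendsto_of_frequently_near_vertex (hc0 : 0 < c) (hc : ∀ e, c ≤ ℓ e)
    (hr : ∀ p q, r p q → p = q ∨ (p ∈ Vset ℓ ∧ q ∈ Vset ℓ)) (hξ : IsCauchyWrt (dG ℓ r) ξ)
    (hnear : ∀ ε : ℝ≥0∞, 0 < ε → ∃ᶠ n in atTop, ∃ w ∈ Vset ℓ, dG ℓ r (ξ n) ⟦w⟧ < ε) :
    ∃ ξ' : Quotient r, Tendsto (fun n => dG ℓ r (ξ n) ξ') atTop (𝓝 0) := by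
  set δ := ENNReal.ofReal (c / 3)
  have hδ : 0 < δ := ENNReal.ofReal_pos.2 (by positivity)
  obtain ⟨N, hN⟩ := hξ δ hδ
  obtain ⟨n₀, hn₀, w₀, hw₀, hn₀w₀⟩ := frequently_atTop.1 (hnear δ hδ) N
  refine ⟨⟦w₀⟧, tendsto_of_isCauchyWrt_of_frequently_lt dG_triangle hξ fun ε hε => ?_⟩
  refine ((hnear (min ε δ) (lt_min hε hδ)).and_eventually (eventually_ge_atTop N)).mono ?_
  rintro n ⟨⟨w, hw, hnw⟩, hn⟩
  have hw₀w : (⟦w₀⟧ : Quotient r) = ⟦w⟧ := by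
    refine mk_eq_mk_of_dG_lt hc hr hw₀ hw ?_
    calc dG ℓ r ⟦w₀⟧ ⟦w⟧ ≤ dG ℓ r ⟦w₀⟧ (ξ n₀) + dG ℓ r (ξ n₀) (ξ n) + dG ℓ r (ξ n) ⟦w⟧ :=
          (dG_triangle _ (ξ n) _).trans (add_le_add_left (dG_triangle _ _ _) _)
      _ < δ + δ + δ := by
          refine ENNReal.add_lt_add (ENNReal.add_lt_add ?_ (hN _ _ hn₀ hn))
            (hnw.trans_le (min_le_right _ _))
          rwa [dG_comm]
      _ = ENNReal.ofReal (c / 3 + c / 3 + c / 3) := by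
          rw [ENNReal.ofReal_add, ENNReal.ofReal_add] <;> positivity
      _ = ENNReal.ofReal c := by ring_nf
  rw [hw₀w]
  exact hnw.trans_le (min_le_left _ _)

lemma exists_tendsto_of_eventually_far_from_vertices (hc0 : 0 < c) (hc : ∀ e, c ≤ ℓ e)
    (hr : ∀ p q, r p q → p = q ∨ (p ∈ Vset ℓ ∧ q ∈ Vset ℓ)) (hξ : IsCauchyWrt (dG ℓ r) ξ)
    {ε : ℝ≥0∞} (hε : 0 < ε) (hfar : ∀ᶠ n in atTop, ∀ w ∈ Vset ℓ, ε ≤ dG ℓ r (ξ n) ⟦w⟧) :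
    ∃ ξ' : Quotient r, Tendsto (fun n => dG ℓ r (ξ n) ξ') atTop (𝓝 0) := by
  choose ρ hρ using fun n => Quotient.exists_rep (ξ n)
  obtain ⟨N₀, hN₀⟩ := eventually_atTop.1 hfar
  have hρ_cauchy : IsCauchyWrt (dE ℓ) ρ := by
    intro s hs
    set t := min s (min ε (ENNReal.ofReal c))
    have ht : 0 < t := lt_min hs (lt_min hε (ENNReal.ofReal_pos.2 hc0))
    obtain ⟨N, hN⟩ := hξ t ht
    refine ⟨max N N₀, fun m n hm hn => ?_⟩
    have hmn := hN m n (le_of_max_le_left hm) (le_of_max_le_left hn)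
    rw [← hρ m, ← hρ n] at hmn
    rcases dE_lt_or_exists_vertex_of_dG_lt hc hr ((min_le_right _ _).trans (min_le_right _ _))
      hmn with hlt | ⟨v, hv, hvlt⟩
    · exact hlt.trans_le (min_le_left _ _)
    · refine absurd (hN₀ m (le_of_max_le_right hm) v hv) (not_le.2 ?_)
      rw [← hρ m]
      exact hvlt.trans_le ((min_le_right _ _).trans (min_le_left _ _))
  obtain ⟨p, hp⟩ := exists_tendsto_dE_of_isCauchyWrt hρ_cauchy
  refine ⟨⟦p⟧, tendsto_of_tendsto_of_tendsto_of_le_of_le tendsto_const_nhds hp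
    (fun _ => zero_le) fun n => ?_⟩
  rw [← hρ n]
  exact dG_mk_le_dE _ _

end MetricGraph

theorem stmt8_general {E : Type*} (ℓ : E → ℝ)
    (r : Setoid (Σ e : E, Set.Icc (0 : ℝ) (ℓ e)))
    (hr : ∀ p q, r p q → p = q ∨ (p ∈ Vset ℓ ∧ q ∈ Vset ℓ))
    (hc : ∃ c > (0 : ℝ), ∀ e, c ≤ ℓ e) :
    ∀ ξ : ℕ → Quotient r,
      (∀ ε : ℝ≥0∞, 0 < ε → ∃ N : ℕ, ∀ m n : ℕ, N ≤ m → N ≤ n →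
        dG ℓ r (ξ m) (ξ n) < ε) →
      ∃ ξ' : Quotient r,
        Filter.Tendsto (fun n => dG ℓ r (ξ n) ξ') Filter.atTop (nhds 0) := by
  obtain ⟨c, hc0, hcℓ⟩ := hc
  intro ξ hξ
  by_cases hnear : ∀ ε : ℝ≥0∞, 0 < ε → ∃ᶠ n in atTop, ∃ w ∈ Vset ℓ, dG ℓ r (ξ n) ⟦w⟧ < ε
  · exact exists_tendsto_of_frequently_near_vertex hc0 hcℓ hr hξ hnear
  · obtain ⟨ε, hε, hfar⟩ : ∃ ε : ℝ≥0∞, 0 < ε ∧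
        ∀ᶠ n in atTop, ∀ w ∈ Vset ℓ, ε ≤ dG ℓ r (ξ n) ⟦w⟧ := by
      simpa only [not_forall, not_frequently, not_exists, not_and, not_lt, exists_prop] using hnear
    exact exists_tendsto_of_eventually_far_from_vertices hc0 hcℓ hr hξ hε hfar

/-- If the edge lengths are uniformly bounded below, the metric graph is complete with
respect to the path pseudometric: every Cauchy sequence converges. -/
theorem stmt8 {E : Type*} [Countable E] (ℓ : E → ℝ) (hℓ : ∀ e, 0 < ℓ e)
    (r : Setoid (Σ e : E, Set.Icc (0 : ℝ) (ℓ e)))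
    (hr : ∀ p q, r p q → p = q ∨ (p ∈ Vset ℓ ∧ q ∈ Vset ℓ))
    (hc : ∃ c > (0 : ℝ), ∀ e, c ≤ ℓ e) :
    ∀ ξ : ℕ → Quotient r,
      (∀ ε : ℝ≥0∞, 0 < ε → ∃ N : ℕ, ∀ m n : ℕ, N ≤ m → N ≤ n →
        dG ℓ r (ξ m) (ξ n) < ε) →
      ∃ ξ' : Quotient r,
        Filter.Tendsto (fun n => dG ℓ r (ξ n) ξ') Filter.atTop (nhds 0) :=
  stmt8_general ℓ r hr hc
end

section
/- Suppose there exists c > 0 with c ≤ ℓ e for all e ∈ E and every equivalence class of ∼ is a finite set. Let λ_e denote Lebesgue measure on ℝ restricted to [0, ℓ e], transported to the summand {e} × Icc 0 (ℓ e) of 𝓔, and let μ := q_*(Σ_e λ_e) be the pushforward to G (with the Borel σ-algebra of the quotient topology) of the sum measure. Then μ is locally finite: every point ξ ∈ G has an open neighborhood U with μ(U) < ∞. -/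
/-!
The class `C` of a point `p` is finite, so the set `F` of edges meeting `C` is finite. Remove from
the edges in `F` the endpoints that are not in `C`. Only finitely many points are removed from
each edge, so the set that remains is open. It is also saturated, because the only
identifications are between endpoints. Its image is therefore an open neighbourhood of the class
of `p`, and its measure is at most the total length of the finitely many edges in `F`.
-/

open MeasureTheory
open scoped ENNReal

lemma MeasureTheory.Measure.sum_map_sigmaMk_apply_fst_preimage_lt_top {ι : Type*} {α : ι → Type*}
    [∀ i, MeasurableSpace (α i)] [MeasurableSpace (Σ i, α i)]
    (μ : ∀ i, Measure (α i)) [∀ i, IsFiniteMeasure (μ i)]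
    (hmk : ∀ i, Measurable (Sigma.mk i : α i → Σ i, α i)) {F : Set ι} (hF : F.Finite)
    (hFm : MeasurableSet (Sigma.fst ⁻¹' F : Set (Σ i, α i))) :
    Measure.sum (fun i => (μ i).map (Sigma.mk i)) (Sigma.fst ⁻¹' F) < ∞ := by
  have hzero : ∀ i ∉ hF.toFinset, (μ i).map (Sigma.mk i) (Sigma.fst ⁻¹' F) = 0 := by
    intro i hi
    have hempty : Sigma.mk i ⁻¹' (Sigma.fst ⁻¹' F) = (∅ : Set (α i)) :=
      Set.eq_empty_of_forall_notMem fun _ => by simpa using hi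
    rw [Measure.map_apply (hmk i) hFm, hempty, measure_empty]
  rw [Measure.sum_apply _ hFm, tsum_eq_sum hzero]
  exact ENNReal.sum_lt_top.2 fun i _ => measure_lt_top _ _

instance isFiniteMeasure_comap_val_Icc (a b : ℝ) :
    IsFiniteMeasure ((volume : Measure ℝ).comap (Subtype.val : Set.Icc a b → ℝ)) :=
  have : IsFiniteMeasureOnCompacts ((volume : Measure ℝ).comap (Subtype.val : Set.Icc a b → ℝ)) :=
    .comap' _ continuous_subtype_val (MeasurableEmbedding.subtype_coe measurableSet_Icc)
  inferInstance

section MetricGraph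

variable {E : Type*} {ℓ : E → ℝ}

lemma isClosed_of_subset_Vset {S : Set (Σ e : E, Set.Icc (0 : ℝ) (ℓ e))} (hS : S ⊆ Vset ℓ) :
    IsClosed S := by
  refine isClosed_sigma_iff.2 fun e => Set.Finite.isClosed ?_
  have hends : (Subtype.val ⁻¹' {0, ℓ e} : Set (Set.Icc (0 : ℝ) (ℓ e))).Finite :=
    (Set.toFinite _).preimage Subtype.val_injective.injOn
  exact hends.subset fun x hx => hS hx

variable (ℓ) (r : Setoid (Σ e : E, Set.Icc (0 : ℝ) (ℓ e)))

def openStar (p : Σ e : E, Set.Icc (0 : ℝ) (ℓ e)) : Set (Σ e : E, Set.Icc (0 : ℝ) (ℓ e)) :=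
  Sigma.fst ⁻¹' (Sigma.fst '' {q | r p q}) \ {z | z ∈ Vset ℓ ∧ ¬ r p z}

variable {ℓ r}

lemma mem_openStar_self (p : Σ e : E, Set.Icc (0 : ℝ) (ℓ e)) : p ∈ openStar ℓ r p :=
  ⟨⟨p, r.refl p, rfl⟩, fun h => h.2 (r.refl p)⟩

lemma isOpen_openStar (p : Σ e : E, Set.Icc (0 : ℝ) (ℓ e)) : IsOpen (openStar ℓ r p) :=
  (isOpen_sigma_fst_preimage _).sdiff (isClosed_of_subset_Vset fun _ hz => hz.1)

lemma preimage_image_openStar (hr : ∀ p q, r p q → p = q ∨ (p ∈ Vset ℓ ∧ q ∈ Vset ℓ))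
    (p : Σ e : E, Set.Icc (0 : ℝ) (ℓ e)) :
    Quotient.mk r ⁻¹' (Quotient.mk r '' openStar ℓ r p) = openStar ℓ r p := by
  refine (Set.subset_preimage_image _ _).antisymm' ?_
  rintro x ⟨z, ⟨hzF, hzV⟩, hzx⟩
  have hzx : r z x := Quotient.exact hzx
  rcases hr z x hzx with rfl | ⟨hz, -⟩
  · exact ⟨hzF, hzV⟩
  · have hpx : r p x := r.trans (not_not.1 fun h => hzV ⟨hz, h⟩) hzx
    exact ⟨⟨x, hpx, rfl⟩, fun h => h.2 hpx⟩

lemma isOpen_image_openStar (hr : ∀ p q, r p q → p = q ∨ (p ∈ Vset ℓ ∧ q ∈ Vset ℓ))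
    (p : Σ e : E, Set.Icc (0 : ℝ) (ℓ e)) : IsOpen (Quotient.mk r '' openStar ℓ r p) := by
  rw [← isQuotientMap_quotient_mk'.isOpen_preimage]
  exact (preimage_image_openStar hr p).symm ▸ isOpen_openStar p

end MetricGraph

theorem stmt10_general {E : Type*} (ℓ : E → ℝ)
    (r : Setoid (Σ e : E, Set.Icc (0 : ℝ) (ℓ e)))
    (hr : ∀ p q, r p q → p = q ∨ (p ∈ Vset ℓ ∧ q ∈ Vset ℓ))
    (hfin : ∀ p, {q | r p q}.Finite) :
    letI : MeasurableSpace (Σ e : E, Set.Icc (0 : ℝ) (ℓ e)) := borel _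
    letI : MeasurableSpace (Quotient r) := borel _
    ∀ ξ : Quotient r, ∃ U : Set (Quotient r), IsOpen U ∧ ξ ∈ U ∧
      Measure.map (Quotient.mk r)
        (Measure.sum fun e =>
          Measure.map (fun x => (⟨e, x⟩ : Σ e : E, Set.Icc (0 : ℝ) (ℓ e)))
            ((volume : Measure ℝ).comap Subtype.val : Measure (Set.Icc (0 : ℝ) (ℓ e)))) U < ⊤ := by
  let : MeasurableSpace (Σ e : E, Set.Icc (0 : ℝ) (ℓ e)) := borel _
  let : MeasurableSpace (Quotient r) := borel _
  have : BorelSpace (Σ e : E, Set.Icc (0 : ℝ) (ℓ e)) := ⟨rfl⟩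
  have : BorelSpace (Quotient r) := ⟨rfl⟩
  rintro ⟨p⟩
  have hU := isOpen_image_openStar hr p
  refine ⟨_, hU, ⟨p, mem_openStar_self p, rfl⟩, ?_⟩
  have hq : Measurable (Quotient.mk r) := isQuotientMap_quotient_mk'.continuous.measurable
  rw [Measure.map_apply hq hU.measurableSet,
    preimage_image_openStar hr p]
  refine (measure_mono Set.sdiff_subset).trans_lt ?_
  exact Measure.sum_map_sigmaMk_apply_fst_preimage_lt_top _
    (fun e => continuous_sigmaMk.measurable) ((hfin p).image _)
    (isOpen_sigma_fst_preimage _).measurableSet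

/-- Suppose the edge lengths are uniformly bounded below and every equivalence class of
`∼` is finite.  Equip `𝓔` and `G` with their Borel σ-algebras, let `λ_e` be Lebesgue
measure on `[0, ℓ e]` transported to the summand `{e} × [0, ℓ e]` of `𝓔`, and let
`μ := q_*(Σ_e λ_e)` be the pushforward to `G` of the sum measure.  Then `μ` is locally
finite: every point of `G` has an open neighborhood of finite measure. -/
theorem stmt10 {E : Type*} [Countable E] (ℓ : E → ℝ) (hℓ : ∀ e, 0 < ℓ e)
    (r : Setoid (Σ e : E, Set.Icc (0 : ℝ) (ℓ e)))
    (hr : ∀ p q, r p q → p = q ∨ (p ∈ Vset ℓ ∧ q ∈ Vset ℓ))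
    (hc : ∃ c > (0 : ℝ), ∀ e, c ≤ ℓ e)
    (hfin : ∀ p, {q | r p q}.Finite) :
    letI : MeasurableSpace (Σ e : E, Set.Icc (0 : ℝ) (ℓ e)) := borel _
    letI : MeasurableSpace (Quotient r) := borel _
    ∀ ξ : Quotient r, ∃ U : Set (Quotient r), IsOpen U ∧ ξ ∈ U ∧
      Measure.map (Quotient.mk r)
        (Measure.sum fun e =>
          Measure.map (fun x => (⟨e, x⟩ : Σ e : E, Set.Icc (0 : ℝ) (ℓ e)))
            ((volume : Measure ℝ).comap Subtype.val : Measure (Set.Icc (0 : ℝ) (ℓ e)))) U < ⊤ :=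
  stmt10_general ℓ r hr hfin
end
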